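/- arXiv:2505.11762 — 4 statements merged into one kernel-verified Lean document; each statement's English description precedes it below -/
import Mathlib

section
/- Let d ≥ 1, let φ : ℝ^d → ℝ be twice continuously differentiable with φ(x) > 0 for all x, let V : ℝ^d → ℝ, and let E₀ ∈ ℝ. Suppose φ satisfies the stationary Schrödinger equation E₀·φ(x) = −(1/2)Δφ(x) + V(x)·φ(x) for all x ∈ ℝ^d. Then for every x ∈ ℝ^d, V(x) + (1/8)·(−2Δ(log(φ²))(x) − |∇(log(φ²))(x)|²) = E₀; in particular the first variation of the total energy functional is constant in x at the eigen-state density ρ₀ = φ². -/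
open scoped BigOperators

/-- The Euclidean Laplacian `Δ f = ∑ⱼ ∂²f/∂xⱼ²` on `ℝ^d`. -/
noncomputable def laplacian {d : ℕ} (f : EuclideanSpace ℝ (Fin d) → ℝ)
    (x : EuclideanSpace ℝ (Fin d)) : ℝ :=
  ∑ i, fderiv ℝ (fun y => fderiv ℝ f y (EuclideanSpace.single i 1)) x (EuclideanSpace.single i 1)

/-! For `ψ = log φ²` the chain rule gives `Δψ = 2Δφ/φ − 2|∇φ|²/φ²` and `|∇ψ|² = 4|∇φ|²/φ²`, so the
gradient terms cancel in `−2Δψ − |∇ψ|² = −4Δφ/φ`, and the Schrödinger equation turns `−Δφ/(2φ)`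
into `E₀ − V`. -/

open Filter Topology

theorem ContDiffAt.differentiableAt_deriv {h : ℝ → ℝ} {t : ℝ} (hh : ContDiffAt ℝ 2 h t) :
    DifferentiableAt ℝ (deriv h) t :=
  ((hh.fderiv_right (m := 1) (by norm_num)).differentiableAt one_ne_zero).clm_apply
    (differentiableAt_const 1)

section Chain

variable {E : Type*} [NormedAddCommGroup E] [NormedSpace ℝ E]
  {h : ℝ → ℝ} {g : E → ℝ} {x : E}

theorem fderiv_comp_eq_deriv_smul (hh : DifferentiableAt ℝ h (g x)) (hg : DifferentiableAt ℝ g x) :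
    fderiv ℝ (h ∘ g) x = deriv h (g x) • fderiv ℝ g x :=
  (hh.hasDerivAt.comp_hasFDerivAt x hg.hasFDerivAt).fderiv

theorem fderiv_fderiv_comp_apply (hh : ContDiffAt ℝ 2 h (g x)) (hg : ContDiffAt ℝ 2 g x) (v : E) :
    fderiv ℝ (fun y => fderiv ℝ (h ∘ g) y v) x v
      = deriv h (g x) * fderiv ℝ (fun y => fderiv ℝ g y v) x v
        + deriv (deriv h) (g x) * fderiv ℝ g x v ^ 2 := by
  have hg₁ : DifferentiableAt ℝ g x := hg.differentiableAt two_ne_zero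
  have h_near : ∀ᶠ y in 𝓝 x, DifferentiableAt ℝ h (g y) ∧ DifferentiableAt ℝ g y :=
    (hg₁.continuousAt.eventually ((hh.eventually (by simp)).mono
      fun _ h => h.differentiableAt two_ne_zero)).and
    ((hg.eventually (by simp)).mono fun _ h => h.differentiableAt two_ne_zero)
  have h_first : (fun y => fderiv ℝ (h ∘ g) y v) =ᶠ[𝓝 x]
      fun y => deriv h (g y) * fderiv ℝ g y v :=
    h_near.mono fun y ⟨hhy, hgy⟩ => by simp [fderiv_comp_eq_deriv_smul hhy hgy]
  have h_outer : HasFDerivAt (fun y => deriv h (g y)) (deriv (deriv h) (g x) • fderiv ℝ g x) x :=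
    hh.differentiableAt_deriv.hasDerivAt.comp_hasFDerivAt x hg₁.hasFDerivAt
  have h_inner : DifferentiableAt ℝ (fun y => fderiv ℝ g y v) x :=
    ((hg.fderiv_right (m := 1) (by norm_num)).differentiableAt one_ne_zero).clm_apply
      (differentiableAt_const v)
  rw [h_first.fderiv_eq, (h_outer.fun_mul h_inner.hasFDerivAt).fderiv]
  simp only [add_apply, smul_apply, smul_eq_mul]
  ring

end Chain

theorem gradient_comp {F : Type*} [NormedAddCommGroup F] [InnerProductSpace ℝ F] [CompleteSpace F]
    {h : ℝ → ℝ} {g : F → ℝ} {x : F} (hh : DifferentiableAt ℝ h (g x)) (hg : DifferentiableAt ℝ g x) :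
    gradient (h ∘ g) x = deriv h (g x) • gradient g x := by
  simp [gradient, fderiv_comp_eq_deriv_smul hh hg]

section Euclidean

variable {d : ℕ}

theorem gradient_apply_single (f : EuclideanSpace ℝ (Fin d) → ℝ) (x : EuclideanSpace ℝ (Fin d))
    (i : Fin d) : gradient f x i = fderiv ℝ f x (EuclideanSpace.single i 1) := by
  have h : inner ℝ (gradient f x) (EuclideanSpace.single i (1 : ℝ))
      = fderiv ℝ f x (EuclideanSpace.single i 1) :=
    InnerProductSpace.toDual_symm_apply
  rw [EuclideanSpace.inner_single_right] at h
  simpa using h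

theorem norm_gradient_sq_eq_sum (f : EuclideanSpace ℝ (Fin d) → ℝ) (x : EuclideanSpace ℝ (Fin d)) :
    ‖gradient f x‖ ^ 2 = ∑ i, fderiv ℝ f x (EuclideanSpace.single i 1) ^ 2 := by
  simp [EuclideanSpace.real_norm_sq_eq, gradient_apply_single]

theorem laplacian_comp {h : ℝ → ℝ} {g : EuclideanSpace ℝ (Fin d) → ℝ}
    {x : EuclideanSpace ℝ (Fin d)} (hh : ContDiffAt ℝ 2 h (g x)) (hg : ContDiffAt ℝ 2 g x) :
    laplacian (h ∘ g) x
      = deriv h (g x) * laplacian g x + deriv (deriv h) (g x) * ‖gradient g x‖ ^ 2 := by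
  simp only [laplacian, fderiv_fderiv_comp_apply hh hg, Finset.sum_add_distrib, Finset.mul_sum,
    norm_gradient_sq_eq_sum]

end Euclidean

theorem Real.deriv_log_sq : deriv (fun t : ℝ => Real.log (t ^ 2)) = fun t => 2 * t⁻¹ := by
  have h : (fun t : ℝ => Real.log (t ^ 2)) = fun t => 2 * Real.log t := by
    funext t
    simp [Real.log_pow]
  rw [h, deriv_const_mul_field', Real.deriv_log']

theorem Real.deriv_deriv_log_sq :
    deriv (deriv fun t : ℝ => Real.log (t ^ 2)) = fun t => -2 * (t ^ 2)⁻¹ := by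
  rw [Real.deriv_log_sq, deriv_const_mul_field']
  funext t
  rw [deriv_inv]
  ring

theorem two_mul_laplacian_log_sq_add_norm_gradient_log_sq_sq {d : ℕ}
    {φ : EuclideanSpace ℝ (Fin d) → ℝ} {x : EuclideanSpace ℝ (Fin d)}
    (hφ : ContDiffAt ℝ 2 φ x) (hx : φ x ≠ 0) :
    2 * laplacian (fun y => Real.log (φ y ^ 2)) x
        + ‖gradient (fun y => Real.log (φ y ^ 2)) x‖ ^ 2
      = 4 * laplacian φ x / φ x := by
  have h_log_sq : ContDiffAt ℝ 2 (fun t : ℝ => Real.log (t ^ 2)) (φ x) :=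
    (contDiffAt_id.pow 2).log (pow_ne_zero 2 hx)
  have h_lap : laplacian (fun y => Real.log (φ y ^ 2)) x
      = 2 * (φ x)⁻¹ * laplacian φ x + -2 * (φ x ^ 2)⁻¹ * ‖gradient φ x‖ ^ 2 := by
    have h := laplacian_comp h_log_sq hφ
    rw [Real.deriv_deriv_log_sq, Real.deriv_log_sq] at h
    exact h
  have h_grad : gradient (fun y => Real.log (φ y ^ 2)) x = (2 * (φ x)⁻¹) • gradient φ x := by
    have h := gradient_comp (h_log_sq.differentiableAt two_ne_zero) (hφ.differentiableAt two_ne_zero)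
    rw [Real.deriv_log_sq] at h
    exact h
  rw [h_lap, h_grad, norm_smul, mul_pow, Real.norm_eq_abs, sq_abs]
  field_simp
  ring

theorem energy_first_variation_constant_at_eigenstate_general (d : ℕ)
    (φ : EuclideanSpace ℝ (Fin d) → ℝ) (hφ : ContDiff ℝ 2 φ)
    (hpos : ∀ x, 0 < φ x)
    (V : EuclideanSpace ℝ (Fin d) → ℝ) (E₀ : ℝ)
    (heigen : ∀ x, E₀ * φ x = -(1 / 2) * laplacian φ x + V x * φ x) :
    ∀ x,
      V x + (1 / 8) *
          (-2 * laplacian (fun y => Real.log (φ y ^ 2)) x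
            - ‖gradient (fun y => Real.log (φ y ^ 2)) x‖ ^ 2)
        = E₀ := by
  intro x
  have hx : φ x ≠ 0 := (hpos x).ne'
  have h_fisher := two_mul_laplacian_log_sq_add_norm_gradient_log_sq_sq hφ.contDiffAt hx
  have h_eigen : laplacian φ x = 2 * (V x - E₀) * φ x := by linarith [heigen x]
  rw [h_eigen] at h_fisher
  field_simp at h_fisher
  linarith

/-- At an energy eigen-state `φ > 0` of the stationary Schrödinger equation
`E₀ φ = −(1/2)Δφ + V φ`, the first variation of the total energy functional
`V + (1/8)(−2Δ log(φ²) − |∇ log(φ²)|²)` is constant, equal to `E₀`, in `x`. -/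
theorem energy_first_variation_constant_at_eigenstate (d : ℕ) (hd : 1 ≤ d)
    (φ : EuclideanSpace ℝ (Fin d) → ℝ) (hφ : ContDiff ℝ 2 φ)
    (hpos : ∀ x, 0 < φ x)
    (V : EuclideanSpace ℝ (Fin d) → ℝ) (E₀ : ℝ)
    (heigen : ∀ x, E₀ * φ x = -(1 / 2) * laplacian φ x + V x * φ x) :
    ∀ x,
      V x + (1 / 8) *
          (-2 * laplacian (fun y => Real.log (φ y ^ 2)) x
            - ‖gradient (fun y => Real.log (φ y ^ 2)) x‖ ^ 2)
        = E₀ :=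
  energy_first_variation_constant_at_eigenstate_general d φ hφ hpos V E₀ heigen
end

section
/- Let d ≥ 1, let ρ : ℝ × ℝ^d → ℝ and Φ : ℝ × ℝ^d → ℝ be smooth with ρ(t,x) > 0 for all (t,x), and let W : ℝ × ℝ^d → ℝ be continuous. Suppose ρ and Φ satisfy the Madelung system: ∂ₜρ + ∇·(ρ∇Φ) = 0 and ∂ₜΦ + (1/2)|∇Φ|² = −W + (1/2)·Δ(√ρ)/√ρ, pointwise on ℝ × ℝ^d. Then the complex-valued function ψ(t,x) := √(ρ(t,x))·exp(i·Φ(t,x)) satisfies the time-dependent Schrödinger equation i·∂ₜψ(t,x) = −(1/2)Δψ(t,x) + W(t,x)·ψ(t,x) pointwise on ℝ × ℝ^d. -/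
open scoped BigOperators RealInnerProductSpace

/-- The Euclidean Laplacian in the spatial variable, for a complex-valued function on `ℝ^d`. -/
noncomputable def laplacianC {d : ℕ} (f : EuclideanSpace ℝ (Fin d) → ℂ)
    (x : EuclideanSpace ℝ (Fin d)) : ℂ :=
  ∑ i, fderiv ℝ (fun y => fderiv ℝ f y (EuclideanSpace.single i 1)) x (EuclideanSpace.single i 1)

/-- The Euclidean Laplacian for a real-valued function on `ℝ^d`. -/
noncomputable def laplacianR {d : ℕ} (f : EuclideanSpace ℝ (Fin d) → ℝ)
    (x : EuclideanSpace ℝ (Fin d)) : ℝ :=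
  ∑ i, fderiv ℝ (fun y => fderiv ℝ f y (EuclideanSpace.single i 1)) x (EuclideanSpace.single i 1)

/-- The divergence `∇·v` of a vector field `v` on `ℝ^d`. -/
noncomputable def divergence {d : ℕ} (v : EuclideanSpace ℝ (Fin d) → EuclideanSpace ℝ (Fin d))
    (x : EuclideanSpace ℝ (Fin d)) : ℝ :=
  ∑ i, fderiv ℝ v x (EuclideanSpace.single i 1) i

section MadelungAux

lemma madelung_grad_apply {d : ℕ} (f : EuclideanSpace ℝ (Fin d) → ℝ)
    (x : EuclideanSpace ℝ (Fin d)) (i : Fin d) :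
    gradient f x i = fderiv ℝ f x (EuclideanSpace.single i 1) := by
  have h1 : (inner ℝ (gradient f x) (EuclideanSpace.single i (1:ℝ)) : ℝ)
      = fderiv ℝ f x (EuclideanSpace.single i 1) := by
    rw [gradient]
    exact InnerProductSpace.toDual_symm_apply
  rw [← h1, EuclideanSpace.inner_single_right]
  simp

lemma madelung_norm_grad_sq {d : ℕ} (f : EuclideanSpace ℝ (Fin d) → ℝ)
    (x : EuclideanSpace ℝ (Fin d)) :
    ‖gradient f x‖ ^ 2 = ∑ i, (fderiv ℝ f x (EuclideanSpace.single i 1)) ^ 2 := by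
  rw [← real_inner_self_eq_norm_sq]
  rw [PiLp.inner_apply]
  refine Finset.sum_congr rfl fun i _ => ?_
  rw [RCLike.inner_apply, madelung_grad_apply]
  simp [sq]

lemma madelung_second_eq {E : Type*} [NormedAddCommGroup E] [NormedSpace ℝ E]
    {F : Type*} [NormedAddCommGroup F] [NormedSpace ℝ F]
    {f : E → F} {x : E} (hf : DifferentiableAt ℝ (fderiv ℝ f) x) (v w : E) :
    fderiv ℝ (fun y => fderiv ℝ f y v) x w = (fderiv ℝ (fderiv ℝ f) x w) v := by
  rw [fderiv_clm_apply hf (differentiableAt_const v)]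
  simp

lemma madelung_hasFDerivAt_mk {E : Type*} [NormedAddCommGroup E] [NormedSpace ℝ E]
    {A P : E → ℝ} {A' P' : E →L[ℝ] ℝ} {y : E}
    (hA : HasFDerivAt A A' y) (hP : HasFDerivAt P P' y) :
    HasFDerivAt (fun z => (A z : ℂ) * Complex.exp (Complex.I * (P z : ℂ)))
      ((A y : ℂ) • (Complex.exp (Complex.I * (P y : ℂ)) • (Complex.I • (Complex.ofRealCLM.comp P')))
        + Complex.exp (Complex.I * (P y : ℂ)) • (Complex.ofRealCLM.comp A')) y := by
  have h1 : HasFDerivAt (fun z => ((A z : ℝ) : ℂ)) (Complex.ofRealCLM.comp A') y :=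
    Complex.ofRealCLM.hasFDerivAt.comp y hA
  have h2 : HasFDerivAt (fun z => Complex.I * ((P z : ℝ) : ℂ))
      (Complex.I • (Complex.ofRealCLM.comp P')) y :=
    (Complex.ofRealCLM.hasFDerivAt.comp y hP).const_mul Complex.I
  exact h1.mul h2.cexp

lemma madelung_fderiv_mk_apply {E : Type*} [NormedAddCommGroup E] [NormedSpace ℝ E]
    {A P : E → ℝ} {y : E} (hA : DifferentiableAt ℝ A y) (hP : DifferentiableAt ℝ P y) (v : E) :
    fderiv ℝ (fun z => (A z : ℂ) * Complex.exp (Complex.I * (P z : ℂ))) y v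
      = (↑(fderiv ℝ A y v) + (A y : ℂ) * Complex.I * ↑(fderiv ℝ P y v))
          * Complex.exp (Complex.I * (P y : ℂ)) := by
  rw [(madelung_hasFDerivAt_mk hA.hasFDerivAt hP.hasFDerivAt).fderiv]
  simp [ContinuousLinearMap.add_apply, ContinuousLinearMap.smul_apply,
    ContinuousLinearMap.comp_apply, smul_eq_mul]
  ring

lemma madelung_second_mk {E : Type*} [NormedAddCommGroup E] [NormedSpace ℝ E]
    {A P : E → ℝ} (hA : ContDiff ℝ (⊤ : ℕ∞) A) (hP : ContDiff ℝ (⊤ : ℕ∞) P) (x : E) (v : E) :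
    fderiv ℝ (fun y => fderiv ℝ (fun z => (A z : ℂ) * Complex.exp (Complex.I * (P z : ℂ))) y v) x v
      = (↑(fderiv ℝ (fun y => fderiv ℝ A y v) x v)
          + 2 * Complex.I * ↑(fderiv ℝ A x v) * ↑(fderiv ℝ P x v)
          + Complex.I * ↑(A x) * ↑(fderiv ℝ (fun y => fderiv ℝ P y v) x v)
          - ↑(A x) * (↑(fderiv ℝ P x v) : ℂ) ^ 2)
        * Complex.exp (Complex.I * (P x : ℂ)) := by
  have hAd : Differentiable ℝ A := hA.differentiable (by simp)
  have hPd : Differentiable ℝ P := hP.differentiable (by simp)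
  have hfun : (fun y => fderiv ℝ (fun z => (A z : ℂ) * Complex.exp (Complex.I * (P z : ℂ))) y v)
      = fun y => (↑(fderiv ℝ A y v) + (A y : ℂ) * Complex.I * ↑(fderiv ℝ P y v))
          * Complex.exp (Complex.I * (P y : ℂ)) := by
    funext y
    exact madelung_fderiv_mk_apply (hAd y) (hPd y) v
  rw [hfun]
  have hA1 : HasFDerivAt (fun y => fderiv ℝ A y v)
      (fderiv ℝ (fun y => fderiv ℝ A y v) x) x :=
    ((((hA.fderiv_right (m := (⊤ : ℕ∞)) (by simp)).differentiable (by simp)).clm_apply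
      (differentiable_const _)).differentiableAt).hasFDerivAt
  have hP1 : HasFDerivAt (fun y => fderiv ℝ P y v)
      (fderiv ℝ (fun y => fderiv ℝ P y v) x) x :=
    ((((hP.fderiv_right (m := (⊤ : ℕ∞)) (by simp)).differentiable (by simp)).clm_apply
      (differentiable_const _)).differentiableAt).hasFDerivAt
  have hA1C : HasFDerivAt (fun y => (↑(fderiv ℝ A y v) : ℂ))
      (Complex.ofRealCLM.comp (fderiv ℝ (fun y => fderiv ℝ A y v) x)) x :=
    Complex.ofRealCLM.hasFDerivAt.comp x hA1
  have hP1C : HasFDerivAt (fun y => (↑(fderiv ℝ P y v) : ℂ))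
      (Complex.ofRealCLM.comp (fderiv ℝ (fun y => fderiv ℝ P y v) x)) x :=
    Complex.ofRealCLM.hasFDerivAt.comp x hP1
  have hAC : HasFDerivAt (fun y => ((A y : ℝ) : ℂ))
      (Complex.ofRealCLM.comp (fderiv ℝ A x)) x :=
    Complex.ofRealCLM.hasFDerivAt.comp x (hAd x).hasFDerivAt
  have hE : HasFDerivAt (fun y => Complex.exp (Complex.I * (P y : ℂ)))
      (Complex.exp (Complex.I * (P x : ℂ)) •
        (Complex.I • (Complex.ofRealCLM.comp (fderiv ℝ P x)))) x :=
    ((Complex.ofRealCLM.hasFDerivAt.comp x (hPd x).hasFDerivAt).const_mul Complex.I).cexp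
  have hc : HasFDerivAt
      (fun y => (↑(fderiv ℝ A y v) : ℂ) + (A y : ℂ) * Complex.I * ↑(fderiv ℝ P y v))
      (Complex.ofRealCLM.comp (fderiv ℝ (fun y => fderiv ℝ A y v) x)
        + (((A x : ℂ) * Complex.I) •
            (Complex.ofRealCLM.comp (fderiv ℝ (fun y => fderiv ℝ P y v) x))
          + (↑(fderiv ℝ P x v) : ℂ) •
              (Complex.I • Complex.ofRealCLM.comp (fderiv ℝ A x)))) x :=
    hA1C.add ((hAC.mul_const Complex.I).mul hP1C)
  have h4 : HasFDerivAt (fun y => ((↑(fderiv ℝ A y v) : ℂ) + (A y : ℂ) * Complex.I * ↑(fderiv ℝ P y v))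
      * Complex.exp (Complex.I * (P y : ℂ))) _ x := hc.mul hE
  rw [h4.fderiv]
  simp [ContinuousLinearMap.add_apply, ContinuousLinearMap.smul_apply,
    ContinuousLinearMap.comp_apply, ContinuousLinearMap.smulRight_apply, smul_eq_mul]
  ring_nf
  rw [Complex.I_sq]
  ring

lemma madelung_time_deriv {r p : ℝ → ℝ} {t : ℝ} (hr : DifferentiableAt ℝ r t)
    (hp : DifferentiableAt ℝ p t) (hpos : 0 < r t) :
    deriv (fun s => (Real.sqrt (r s) : ℂ) * Complex.exp (Complex.I * (p s : ℂ))) t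
      = (↑(deriv r t / (2 * Real.sqrt (r t)))
          + (Real.sqrt (r t) : ℂ) * Complex.I * ↑(deriv p t))
          * Complex.exp (Complex.I * (p t : ℂ)) := by
  have h1 := (hr.hasDerivAt.sqrt hpos.ne').ofReal_comp
  have h2 := (HasDerivAt.const_mul Complex.I hp.hasDerivAt.ofReal_comp).cexp
  have h3 : HasDerivAt (fun s => (Real.sqrt (r s) : ℂ) * Complex.exp (Complex.I * (p s : ℂ))) _ t := h1.mul h2
  rw [h3.deriv]
  ring

lemma madelung_div_smul_grad {d : ℕ} {f g : EuclideanSpace ℝ (Fin d) → ℝ}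
    (hf : ContDiff ℝ (⊤ : ℕ∞) f) (hg : ContDiff ℝ (⊤ : ℕ∞) g) (x : EuclideanSpace ℝ (Fin d)) :
    divergence (fun y => g y • gradient f y) x
      = ∑ i, (fderiv ℝ g x (EuclideanSpace.single i 1) * fderiv ℝ f x (EuclideanSpace.single i 1)
          + g x * fderiv ℝ (fun y => fderiv ℝ f y (EuclideanSpace.single i 1)) x
              (EuclideanSpace.single i 1)) := by
  have hdP1 : ∀ j : Fin d, Differentiable ℝ
      (fun y => fderiv ℝ f y (EuclideanSpace.single j 1)) := by
    intro j
    exact ((hf.fderiv_right (m := (⊤ : ℕ∞)) (by simp)).differentiable (by simp)).clm_apply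
      (differentiable_const _)
  have hgd : Differentiable ℝ g := hg.differentiable (by simp)
  set u : EuclideanSpace ℝ (Fin d) → (Fin d → ℝ) :=
    fun y => fun j => g y * fderiv ℝ f y (EuclideanSpace.single j 1) with hu_def
  have hu : ∀ j, DifferentiableAt ℝ (fun y => g y * fderiv ℝ f y (EuclideanSpace.single j 1)) x :=
    fun j => (hgd x).mul (hdP1 j x)
  have huD : DifferentiableAt ℝ u x := differentiableAt_pi.mpr fun j => hu j
  set L := (PiLp.continuousLinearEquiv 2 ℝ (fun _ : Fin d => ℝ)).symm with hL
  have hveq : (fun y => g y • gradient f y) = fun y => L (u y) := by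
    funext y
    ext j
    simp only [hL, hu_def, PiLp.continuousLinearEquiv_symm_apply, PiLp.smul_apply, smul_eq_mul,
      madelung_grad_apply]
  have hvd : HasFDerivAt (fun y => L (u y))
      ((L : (Fin d → ℝ) →L[ℝ] EuclideanSpace ℝ (Fin d)).comp (fderiv ℝ u x)) x :=
    ((L : (Fin d → ℝ) →L[ℝ] EuclideanSpace ℝ (Fin d)).hasFDerivAt).comp x huD.hasFDerivAt
  rw [divergence, hveq]
  refine Finset.sum_congr rfl fun i _ => ?_
  rw [hvd.fderiv]
  have h1 : ((L : (Fin d → ℝ) →L[ℝ] EuclideanSpace ℝ (Fin d)).comp (fderiv ℝ u x))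
      (EuclideanSpace.single i 1) i = fderiv ℝ u x (EuclideanSpace.single i 1) i := by
    simp [hL]
  rw [h1]
  have h2 : fderiv ℝ u x = ContinuousLinearMap.pi
      (fun j => fderiv ℝ (fun y => g y * fderiv ℝ f y (EuclideanSpace.single j 1)) x) := by
    rw [hu_def]
    exact fderiv_pi fun j => hu j
  rw [h2]
  simp only [ContinuousLinearMap.pi_apply]
  have h3 : HasFDerivAt (fun y => g y * fderiv ℝ f y (EuclideanSpace.single i 1))
      (g x • fderiv ℝ (fun y => fderiv ℝ f y (EuclideanSpace.single i 1)) x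
        + fderiv ℝ f x (EuclideanSpace.single i 1) • fderiv ℝ g x) x :=
    (hgd x).hasFDerivAt.mul (hdP1 i x).hasFDerivAt
  rw [h3.fderiv]
  simp [smul_eq_mul]
  ring

lemma madelung_final_algebra (a Rt Pt Wv S2 CC DD QQ : ℝ) (ex : ℂ) (ha : 0 < a)
    (h1 : Rt + (2 * a * CC + a ^ 2 * DD) = 0)
    (h2 : Pt + (1 / 2) * QQ = -Wv + (1 / 2) * S2 / a) :
    Complex.I * ((↑(Rt / (2 * a)) + (a : ℂ) * Complex.I * ↑Pt) * ex)
      = -(1 / 2 : ℂ) * ((↑S2 + 2 * Complex.I * ↑CC + Complex.I * ↑a * ↑DD - ↑a * ↑QQ) * ex)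
        + (Wv : ℂ) * ((a : ℂ) * ex) := by
  have ha' : (a : ℂ) ≠ 0 := Complex.ofReal_ne_zero.mpr ha.ne'
  have h2' : 2 * a * Pt + a * QQ + 2 * Wv * a - S2 = 0 := by
    field_simp at h2
    nlinarith [h2]
  have h1C : (Rt : ℂ) + (2 * a * CC + a ^ 2 * DD) = 0 := by exact_mod_cast congrArg Complex.ofReal h1
  have h2C : 2 * (a : ℂ) * Pt + a * QQ + 2 * Wv * a - S2 = 0 := by
    exact_mod_cast congrArg Complex.ofReal h2'
  push_cast
  have hI : Complex.I * Complex.I = -1 := Complex.I_mul_I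
  field_simp
  linear_combination (ex*Complex.I) * h1C - ((a:ℂ)*ex) * h2C + (2*(a:ℂ)^2*Pt*ex) * hI

end MadelungAux

/-- If `(ρ, Φ)` with `ρ > 0` solves the Madelung system
`∂ₜρ + ∇·(ρ∇Φ) = 0`, `∂ₜΦ + (1/2)|∇Φ|² = −W + (1/2)Δ(√ρ)/√ρ`,
then `ψ := √ρ · e^{iΦ}` solves the time-dependent Schrödinger equation
`i ∂ₜψ = −(1/2)Δψ + W ψ`. -/
theorem madelung_implies_schrodinger (d : ℕ) (hd : 1 ≤ d)
    (ρ Φ : ℝ → EuclideanSpace ℝ (Fin d) → ℝ)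
    (hρ : ContDiff ℝ (⊤ : ℕ∞) (fun p : ℝ × EuclideanSpace ℝ (Fin d) => ρ p.1 p.2))
    (hΦ : ContDiff ℝ (⊤ : ℕ∞) (fun p : ℝ × EuclideanSpace ℝ (Fin d) => Φ p.1 p.2))
    (hpos : ∀ t x, 0 < ρ t x)
    (W : ℝ → EuclideanSpace ℝ (Fin d) → ℝ)
    (hW : Continuous (fun p : ℝ × EuclideanSpace ℝ (Fin d) => W p.1 p.2))
    (hcont : ∀ t x,
      deriv (fun s => ρ s x) t
        + divergence (fun y => ρ t y • gradient (Φ t) y) x = 0)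
    (hHJ : ∀ t x,
      deriv (fun s => Φ s x) t + (1 / 2) * ‖gradient (Φ t) x‖ ^ 2
        = -(W t x) + (1 / 2) * laplacianR (fun y => Real.sqrt (ρ t y)) x / Real.sqrt (ρ t x)) :
    ∀ t x,
      Complex.I * deriv
          (fun s => (Real.sqrt (ρ s x) : ℂ) * Complex.exp (Complex.I * (Φ s x : ℂ))) t
        = -(1 / 2 : ℂ) * laplacianC
            (fun y => (Real.sqrt (ρ t y) : ℂ) * Complex.exp (Complex.I * (Φ t y : ℂ))) x
          + (W t x : ℂ) * ((Real.sqrt (ρ t x) : ℂ) * Complex.exp (Complex.I * (Φ t x : ℂ))) := by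
  intro t x
  have hρx : ContDiff ℝ (⊤ : ℕ∞) (ρ t) := by exact hρ.comp (contDiff_const.prodMk contDiff_id)
  have hΦx : ContDiff ℝ (⊤ : ℕ∞) (Φ t) := by exact hΦ.comp (contDiff_const.prodMk contDiff_id)
  have hρt : ContDiff ℝ (⊤ : ℕ∞) (fun s => ρ s x) := by exact hρ.comp (contDiff_id.prodMk contDiff_const)
  have hΦt : ContDiff ℝ (⊤ : ℕ∞) (fun s => Φ s x) := by exact hΦ.comp (contDiff_id.prodMk contDiff_const)
  have hA : ContDiff ℝ (⊤ : ℕ∞) (fun y => Real.sqrt (ρ t y)) := by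
    rw [contDiff_iff_contDiffAt]
    intro y
    exact (Real.contDiffAt_sqrt (hpos t y).ne').comp y hρx.contDiffAt
  have ha : 0 < Real.sqrt (ρ t x) := Real.sqrt_pos.mpr (hpos t x)
  -- time derivative
  have htime : deriv (fun s => (Real.sqrt (ρ s x) : ℂ) * Complex.exp (Complex.I * (Φ s x : ℂ))) t
      = (↑(deriv (fun s => ρ s x) t / (2 * Real.sqrt (ρ t x)))
          + (Real.sqrt (ρ t x) : ℂ) * Complex.I * ↑(deriv (fun s => Φ s x) t))
          * Complex.exp (Complex.I * (Φ t x : ℂ)) := by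
    exact madelung_time_deriv ((hρt.differentiable (by simp)).differentiableAt)
      ((hΦt.differentiable (by simp)).differentiableAt) (hpos t x)
  -- spatial second derivatives of ψ
  have hkey : ∀ i : Fin d,
      fderiv ℝ (fun y => fderiv ℝ
          (fun z => (Real.sqrt (ρ t z) : ℂ) * Complex.exp (Complex.I * (Φ t z : ℂ))) y
          (EuclideanSpace.single i 1)) x (EuclideanSpace.single i 1)
      = (↑(fderiv ℝ (fun y => fderiv ℝ (fun z => Real.sqrt (ρ t z)) y
              (EuclideanSpace.single i 1)) x (EuclideanSpace.single i 1))
          + 2 * Complex.I * ↑(fderiv ℝ (fun z => Real.sqrt (ρ t z)) x (EuclideanSpace.single i 1))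
              * ↑(fderiv ℝ (Φ t) x (EuclideanSpace.single i 1))
          + Complex.I * ↑(Real.sqrt (ρ t x))
              * ↑(fderiv ℝ (fun y => fderiv ℝ (Φ t) y (EuclideanSpace.single i 1)) x
                  (EuclideanSpace.single i 1))
          - ↑(Real.sqrt (ρ t x))
              * (↑(fderiv ℝ (Φ t) x (EuclideanSpace.single i 1)) : ℂ) ^ 2)
        * Complex.exp (Complex.I * (Φ t x : ℂ)) := by
    intro i
    exact madelung_second_mk hA hΦx x (EuclideanSpace.single i 1)
  -- Laplacian of ψ
  have hlap : laplacianC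
        (fun y => (Real.sqrt (ρ t y) : ℂ) * Complex.exp (Complex.I * (Φ t y : ℂ))) x
      = (↑(∑ i, fderiv ℝ (fun y => fderiv ℝ (fun z => Real.sqrt (ρ t z)) y
              (EuclideanSpace.single i 1)) x (EuclideanSpace.single i 1))
          + 2 * Complex.I * ↑(∑ i, fderiv ℝ (fun z => Real.sqrt (ρ t z)) x (EuclideanSpace.single i 1)
              * fderiv ℝ (Φ t) x (EuclideanSpace.single i 1))
          + Complex.I * ↑(Real.sqrt (ρ t x))
              * ↑(∑ i, fderiv ℝ (fun y => fderiv ℝ (Φ t) y (EuclideanSpace.single i 1)) x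
                  (EuclideanSpace.single i 1))
          - ↑(Real.sqrt (ρ t x)) * ↑(∑ i, (fderiv ℝ (Φ t) x (EuclideanSpace.single i 1)) ^ 2))
        * Complex.exp (Complex.I * (Φ t x : ℂ)) := by
    simp only [laplacianC]
    refine (Finset.sum_congr rfl fun i _ => hkey i).trans ?_
    rw [← Finset.sum_mul]
    congr 1
    push_cast
    rw [Finset.mul_sum, Finset.mul_sum, Finset.mul_sum]
    rw [← Finset.sum_add_distrib, ← Finset.sum_add_distrib, ← Finset.sum_sub_distrib]
    refine Finset.sum_congr rfl fun i _ => ?_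
    ring
  -- relation between first partials of √ρ and of ρ
  have hA1R : ∀ i : Fin d, fderiv ℝ (ρ t) x (EuclideanSpace.single i 1)
      = 2 * Real.sqrt (ρ t x)
        * fderiv ℝ (fun z => Real.sqrt (ρ t z)) x (EuclideanSpace.single i 1) := by
    intro i
    have h : fderiv ℝ (fun z => Real.sqrt (ρ t z)) x
        = (1 / (2 * Real.sqrt (ρ t x))) • fderiv ℝ (ρ t) x := by
      exact ((hρx.differentiable (by simp) x).hasFDerivAt.sqrt (hpos t x).ne').fderiv
    rw [h, ContinuousLinearMap.smul_apply, smul_eq_mul]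
    field_simp
  -- continuity equation in coordinates
  have hdiv := madelung_div_smul_grad hΦx hρx x
  have hc1 : deriv (fun s => ρ s x) t
      + (2 * Real.sqrt (ρ t x)
          * (∑ i, fderiv ℝ (fun z => Real.sqrt (ρ t z)) x (EuclideanSpace.single i 1)
              * fderiv ℝ (Φ t) x (EuclideanSpace.single i 1))
        + Real.sqrt (ρ t x) ^ 2
          * (∑ i, fderiv ℝ (fun y => fderiv ℝ (Φ t) y (EuclideanSpace.single i 1)) x
              (EuclideanSpace.single i 1))) = 0 := by
    have h := hcont t x
    rw [hdiv] at h
    rw [← h]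
    congr 1
    rw [Finset.mul_sum, Finset.mul_sum, ← Finset.sum_add_distrib]
    refine Finset.sum_congr rfl fun i _ => ?_
    rw [hA1R i, Real.sq_sqrt (hpos t x).le]
    ring
  -- Hamilton–Jacobi equation in coordinates
  have hj := hHJ t x
  rw [madelung_norm_grad_sq] at hj
  simp only [laplacianR] at hj
  -- assemble
  rw [htime, hlap]
  exact madelung_final_algebra (Real.sqrt (ρ t x)) (deriv (fun s => ρ s x) t)
    (deriv (fun s => Φ s x) t) (W t x) _ _ _ _ _ ha hc1 hj
end

section
/- Let d ≥ 1, let ρ : ℝ × ℝ^d → ℝ and Φ : ℝ × ℝ^d → ℝ be smooth with ρ(t,x) > 0 for all (t,x), and let W : ℝ × ℝ^d → ℝ be continuous. Define ψ(t,x) := √(ρ(t,x))·exp(i·Φ(t,x)), and suppose ψ satisfies i·∂ₜψ = −(1/2)Δψ + W(t,x)·ψ pointwise on ℝ × ℝ^d. Then ρ and Φ satisfy the Madelung system: ∂ₜρ + ∇·(ρ∇Φ) = 0 and ∂ₜΦ + (1/2)|∇Φ|² = −W + (1/2)·Δ(√ρ)/√ρ, pointwise on ℝ × ℝ^d. -/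
open scoped BigOperators RealInnerProductSpace

section Aux
open Complex

lemma aux_hasFDerivAt_mulexp {E : Type*} [NormedAddCommGroup E] [NormedSpace ℝ E]
    (a φ : E → ℝ) (y : E) (da dφ : E →L[ℝ] ℝ) (ha : HasFDerivAt a da y)
    (hφ : HasFDerivAt φ dφ y) :
    HasFDerivAt (fun z => (a z : ℂ) * Complex.exp (Complex.I * (φ z : ℂ)))
      (Complex.exp (Complex.I * (φ y : ℂ)) •
        (Complex.ofRealCLM.comp da + ((a y : ℂ) * Complex.I) • Complex.ofRealCLM.comp dφ)) y := by
  have h1 : HasFDerivAt (fun z => ((a z : ℝ) : ℂ)) (Complex.ofRealCLM.comp da) y :=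
    Complex.ofRealCLM.hasFDerivAt.comp y ha
  have h2 : HasFDerivAt (fun z => Complex.I * (φ z : ℂ))
      (Complex.I • Complex.ofRealCLM.comp dφ) y :=
    (Complex.ofRealCLM.hasFDerivAt.comp y hφ).const_mul Complex.I
  have h4 := h1.mul h2.cexp
  refine h4.congr_fderiv ?_
  ext v
  simp [ContinuousLinearMap.smul_apply, smul_eq_mul]
  ring

lemma aux_deriv_mulexp (b c : ℝ → ℝ) (t b' c' : ℝ) (hb : HasDerivAt b b' t)
    (hc : HasDerivAt c c' t) :
    deriv (fun s => (b s : ℂ) * Complex.exp (Complex.I * (c s : ℂ))) t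
      = Complex.exp (Complex.I * (c t : ℂ)) * ((b' : ℂ) + (b t : ℂ) * Complex.I * (c' : ℂ)) := by
  have h := (aux_hasFDerivAt_mulexp b c t _ _ hb.hasFDerivAt hc.hasFDerivAt).hasDerivAt
  rw [h.deriv]
  simp [smul_eq_mul]
  ring

lemma aux_diff_dir {E : Type*} [NormedAddCommGroup E] [NormedSpace ℝ E]
    (a : E → ℝ) (ha : ContDiff ℝ (⊤ : ℕ∞) a) (u : E) :
    Differentiable ℝ (fun y => fderiv ℝ a y u) :=
  (ContinuousLinearMap.apply ℝ ℝ u).differentiable.comp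
    ((ha.fderiv_right (m := 1) (by exact WithTop.coe_le_coe.2 le_top)).differentiable one_ne_zero)

lemma aux_fderiv_mulexp_apply {E : Type*} [NormedAddCommGroup E] [NormedSpace ℝ E]
    (a φ : E → ℝ) (ha : ContDiff ℝ (⊤ : ℕ∞) a) (hφ : ContDiff ℝ (⊤ : ℕ∞) φ) (y u : E) :
    fderiv ℝ (fun z => (a z : ℂ) * Complex.exp (Complex.I * (φ z : ℂ))) y u
      = Complex.exp (Complex.I * (φ y : ℂ)) *
          ((fderiv ℝ a y u : ℂ) + (a y : ℂ) * Complex.I * (fderiv ℝ φ y u : ℂ)) := by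
  rw [(aux_hasFDerivAt_mulexp a φ y _ _ (ha.differentiable (by simp) y).hasFDerivAt
      (hφ.differentiable (by simp) y).hasFDerivAt).fderiv]
  simp [smul_eq_mul]
  ring

lemma aux_second_dir {E : Type*} [NormedAddCommGroup E] [NormedSpace ℝ E]
    (a φ : E → ℝ) (ha : ContDiff ℝ (⊤ : ℕ∞) a) (hφ : ContDiff ℝ (⊤ : ℕ∞) φ) (x u : E) :
    fderiv ℝ (fun y => fderiv ℝ (fun z => (a z : ℂ) * Complex.exp (Complex.I * (φ z : ℂ))) y u) x u
      = Complex.exp (Complex.I * (φ x : ℂ)) *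
          (((fderiv ℝ (fun y => fderiv ℝ a y u) x u : ℝ) : ℂ)
            - (a x : ℂ) * ((fderiv ℝ φ x u : ℝ) : ℂ) ^ 2
            + Complex.I * (2 * (fderiv ℝ a x u : ℂ) * (fderiv ℝ φ x u : ℂ)
              + (a x : ℂ) * ((fderiv ℝ (fun y => fderiv ℝ φ y u) x u : ℝ) : ℂ))) := by
  have hfun : (fun y => fderiv ℝ (fun z => (a z : ℂ) * Complex.exp (Complex.I * (φ z : ℂ))) y u)
      = fun y => Complex.exp (Complex.I * (φ y : ℂ)) *
          ((fderiv ℝ a y u : ℂ) + (a y : ℂ) * Complex.I * (fderiv ℝ φ y u : ℂ)) := by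
    funext y; exact aux_fderiv_mulexp_apply a φ ha hφ y u
  rw [hfun]
  have he : HasFDerivAt (fun y => Complex.exp (Complex.I * (φ y : ℂ)))
      (Complex.exp (Complex.I * (φ x : ℂ)) •
        (Complex.I • Complex.ofRealCLM.comp (fderiv ℝ φ x))) x :=
    ((Complex.ofRealCLM.hasFDerivAt.comp x
      (hφ.differentiable (by simp) x).hasFDerivAt).const_mul Complex.I).cexp
  have hA : HasFDerivAt (fun y => ((fderiv ℝ a y u : ℝ) : ℂ))
      (Complex.ofRealCLM.comp (fderiv ℝ (fun y => fderiv ℝ a y u) x)) x :=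
    Complex.ofRealCLM.hasFDerivAt.comp x (aux_diff_dir a ha u x).hasFDerivAt
  have hP : HasFDerivAt (fun y => ((fderiv ℝ φ y u : ℝ) : ℂ))
      (Complex.ofRealCLM.comp (fderiv ℝ (fun y => fderiv ℝ φ y u) x)) x :=
    Complex.ofRealCLM.hasFDerivAt.comp x (aux_diff_dir φ hφ u x).hasFDerivAt
  have ha' : HasFDerivAt (fun y => ((a y : ℝ) : ℂ))
      (Complex.ofRealCLM.comp (fderiv ℝ a x)) x :=
    Complex.ofRealCLM.hasFDerivAt.comp x (ha.differentiable (by simp) x).hasFDerivAt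
  have hG := hA.add (((ha'.mul_const Complex.I)).mul hP)
  have h : HasFDerivAt (fun y => Complex.exp (Complex.I * (φ y : ℂ)) *
      ((fderiv ℝ a y u : ℂ) + (a y : ℂ) * Complex.I * (fderiv ℝ φ y u : ℂ))) _ x := he.mul hG
  rw [h.fderiv]
  simp [ContinuousLinearMap.smul_apply, smul_eq_mul]
  ring_nf
  simp [Complex.I_sq]
  ring

lemma aux_grad_component {d : ℕ} (f : EuclideanSpace ℝ (Fin d) → ℝ)
    (y : EuclideanSpace ℝ (Fin d)) (i : Fin d) :
    gradient f y i = fderiv ℝ f y (EuclideanSpace.single i 1) := by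
  have h : (inner ℝ (gradient f y) (EuclideanSpace.single i (1:ℝ)) : ℝ)
      = fderiv ℝ f y (EuclideanSpace.single i 1) :=
    InnerProductSpace.toDual_symm_apply
  rw [EuclideanSpace.inner_single_right] at h
  simpa using h

end Aux

/-- If `ψ := √ρ · e^{iΦ}` with `ρ > 0` solves the time-dependent Schrödinger equation
`i ∂ₜψ = −(1/2)Δψ + W ψ`, then `(ρ, Φ)` solves the Madelung system
`∂ₜρ + ∇·(ρ∇Φ) = 0`, `∂ₜΦ + (1/2)|∇Φ|² = −W + (1/2)Δ(√ρ)/√ρ`. -/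
theorem schrodinger_implies_madelung (d : ℕ) (hd : 1 ≤ d)
    (ρ Φ : ℝ → EuclideanSpace ℝ (Fin d) → ℝ)
    (hρ : ContDiff ℝ (⊤ : ℕ∞) (fun p : ℝ × EuclideanSpace ℝ (Fin d) => ρ p.1 p.2))
    (hΦ : ContDiff ℝ (⊤ : ℕ∞) (fun p : ℝ × EuclideanSpace ℝ (Fin d) => Φ p.1 p.2))
    (hpos : ∀ t x, 0 < ρ t x)
    (W : ℝ → EuclideanSpace ℝ (Fin d) → ℝ)
    (hW : Continuous (fun p : ℝ × EuclideanSpace ℝ (Fin d) => W p.1 p.2))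
    (hTDSE : ∀ t x,
      Complex.I * deriv
          (fun s => (Real.sqrt (ρ s x) : ℂ) * Complex.exp (Complex.I * (Φ s x : ℂ))) t
        = -(1 / 2 : ℂ) * laplacianC
            (fun y => (Real.sqrt (ρ t y) : ℂ) * Complex.exp (Complex.I * (Φ t y : ℂ))) x
          + (W t x : ℂ) * ((Real.sqrt (ρ t x) : ℂ) * Complex.exp (Complex.I * (Φ t x : ℂ)))) :
    ∀ t x,
      (deriv (fun s => ρ s x) t
          + divergence (fun y => ρ t y • gradient (Φ t) y) x = 0)
      ∧ (deriv (fun s => Φ s x) t + (1 / 2) * ‖gradient (Φ t) x‖ ^ 2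
          = -(W t x)
            + (1 / 2) * laplacianR (fun y => Real.sqrt (ρ t y)) x / Real.sqrt (ρ t x)) := by
  intro t x
  -- basic notation
  set u : Fin d → EuclideanSpace ℝ (Fin d) := fun i => EuclideanSpace.single i 1 with hu
  have hposx := hpos t x
  set B : ℝ := Real.sqrt (ρ t x) with hB
  have hBpos : 0 < B := Real.sqrt_pos.2 hposx
  have hBne : B ≠ 0 := hBpos.ne'
  have hB2 : B ^ 2 = ρ t x := Real.sq_sqrt hposx.le
  -- slice smoothness
  have hρt : ContDiff ℝ (⊤ : ℕ∞) (fun y => ρ t y) := hρ.comp (contDiff_const.prodMk contDiff_id)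
  have hΦt : ContDiff ℝ (⊤ : ℕ∞) (fun y => Φ t y) := hΦ.comp (contDiff_const.prodMk contDiff_id)
  have hρx : ContDiff ℝ (⊤ : ℕ∞) (fun s => ρ s x) := hρ.comp (contDiff_id.prodMk contDiff_const)
  have hΦx : ContDiff ℝ (⊤ : ℕ∞) (fun s => Φ s x) := hΦ.comp (contDiff_id.prodMk contDiff_const)
  have hA : ContDiff ℝ (⊤ : ℕ∞) (fun y => Real.sqrt (ρ t y)) := by
    rw [contDiff_iff_contDiffAt]
    intro y
    exact (Real.contDiffAt_sqrt (hpos t y).ne').comp y hρt.contDiffAt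
  -- abbreviations for the real quantities
  set ρ' : ℝ := deriv (fun s => ρ s x) t with hρ'
  set Ct : ℝ := deriv (fun s => Φ s x) t with hCt
  set Da : Fin d → ℝ := fun i => fderiv ℝ (fun y => Real.sqrt (ρ t y)) x (u i) with hDa
  set Dρ : Fin d → ℝ := fun i => fderiv ℝ (fun y => ρ t y) x (u i) with hDρ
  set DΦ : Fin d → ℝ := fun i => fderiv ℝ (fun y => Φ t y) x (u i) with hDΦ
  set DDa : Fin d → ℝ :=
    fun i => fderiv ℝ (fun y => fderiv ℝ (fun z => Real.sqrt (ρ t z)) y (u i)) x (u i) with hDDa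
  set DDΦ : Fin d → ℝ :=
    fun i => fderiv ℝ (fun y => fderiv ℝ (fun z => Φ t z) y (u i)) x (u i) with hDDΦ
  -- time derivatives
  have hρ't : HasDerivAt (fun s => ρ s x) ρ' t :=
    ((hρx.differentiable (by simp)) t).hasDerivAt
  have hΦ't : HasDerivAt (fun s => Φ s x) Ct t :=
    ((hΦx.differentiable (by simp)) t).hasDerivAt
  have hBt : HasDerivAt (fun s => Real.sqrt (ρ s x)) (1 / (2 * B) * ρ') t := by
    have h := (Real.hasDerivAt_sqrt (hpos t x).ne').comp t hρ't
    exact h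
  -- sqrt spatial derivative relation
  have hsqrt_dir : ∀ i, Da i = 1 / (2 * B) * Dρ i := by
    intro i
    have h := (Real.hasDerivAt_sqrt (hpos t x).ne').comp_hasFDerivAt x
      ((hρt.differentiable (by simp)) x).hasFDerivAt
    have h2 : fderiv ℝ (fun y => Real.sqrt (ρ t y)) x
        = (1 / (2 * Real.sqrt (ρ t x))) • fderiv ℝ (fun y => ρ t y) x := by
      have h' : HasFDerivAt (fun y => Real.sqrt (ρ t y))
          ((1 / (2 * Real.sqrt (ρ t x))) • fderiv ℝ (fun y => ρ t y) x) x := h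
      exact h'.fderiv
    rw [hDa]
    simp only [h2, ContinuousLinearMap.smul_apply, smul_eq_mul]
    rfl
  -- time derivative of ψ
  have hderiv_t : deriv (fun s => (Real.sqrt (ρ s x) : ℂ)
        * Complex.exp (Complex.I * (Φ s x : ℂ))) t
      = Complex.exp (Complex.I * (Φ t x : ℂ))
          * ((1 / (2 * B) * ρ' : ℝ) + (B : ℂ) * Complex.I * (Ct : ℝ)) :=
    aux_deriv_mulexp _ _ t _ _ hBt hΦ't
  -- laplacian of ψ
  have hlap : laplacianC (fun y => (Real.sqrt (ρ t y) : ℂ)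
        * Complex.exp (Complex.I * (Φ t y : ℂ))) x
      = Complex.exp (Complex.I * (Φ t x : ℂ)) *
          (((∑ i, DDa i : ℝ) : ℂ) - (B : ℂ) * ((∑ i, (DΦ i) ^ 2 : ℝ) : ℂ)
            + Complex.I * (2 * ((∑ i, Da i * DΦ i : ℝ) : ℂ)
              + (B : ℂ) * ((∑ i, DDΦ i : ℝ) : ℂ))) := by
    have hstep : laplacianC (fun y => (Real.sqrt (ρ t y) : ℂ)
          * Complex.exp (Complex.I * (Φ t y : ℂ))) x
        = ∑ i, Complex.exp (Complex.I * (Φ t x : ℂ)) *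
            (((DDa i : ℝ) : ℂ) - (B : ℂ) * ((DΦ i : ℝ) : ℂ) ^ 2
              + Complex.I * (2 * ((Da i : ℝ) : ℂ) * ((DΦ i : ℝ) : ℂ)
                + (B : ℂ) * ((DDΦ i : ℝ) : ℂ))) := by
      refine Finset.sum_congr rfl fun i _ => ?_
      exact aux_second_dir (fun y => Real.sqrt (ρ t y)) (fun y => Φ t y) hA hΦt x (u i)
    rw [hstep, ← Finset.mul_sum]
    congr 1
    push_cast
    rw [Finset.mul_sum, Finset.mul_sum, Finset.mul_sum, ← Finset.sum_sub_distrib,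
      ← Finset.sum_add_distrib, Finset.mul_sum, ← Finset.sum_add_distrib]
    refine Finset.sum_congr rfl fun i _ => ?_
    ring
  -- plug into TDSE and cancel the exponential
  have hT := hTDSE t x
  rw [hderiv_t, hlap] at hT
  set e : ℂ := Complex.exp (Complex.I * (Φ t x : ℂ)) with he
  have hene : e ≠ 0 := Complex.exp_ne_zero _
  have hT' : Complex.I * (((1 / (2 * B) * ρ' : ℝ) : ℂ) + (B : ℂ) * Complex.I * ((Ct : ℝ) : ℂ))
      = -(1 / 2 : ℂ) * (((∑ i, DDa i : ℝ) : ℂ) - (B : ℂ) * ((∑ i, (DΦ i) ^ 2 : ℝ) : ℂ)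
            + Complex.I * (2 * ((∑ i, Da i * DΦ i : ℝ) : ℂ)
              + (B : ℂ) * ((∑ i, DDΦ i : ℝ) : ℂ)))
        + ((W t x : ℝ) : ℂ) * (B : ℂ) := by
    apply mul_left_cancel₀ hene
    calc e * (Complex.I * (((1 / (2 * B) * ρ' : ℝ) : ℂ) + (B : ℂ) * Complex.I * ((Ct : ℝ) : ℂ)))
        = Complex.I * (e * (((1 / (2 * B) * ρ' : ℝ) : ℂ)
            + (B : ℂ) * Complex.I * ((Ct : ℝ) : ℂ))) := by ring
      _ = -(1 / 2 : ℂ) * (e * (((∑ i, DDa i : ℝ) : ℂ) - (B : ℂ) * ((∑ i, (DΦ i) ^ 2 : ℝ) : ℂ)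
            + Complex.I * (2 * ((∑ i, Da i * DΦ i : ℝ) : ℂ)
              + (B : ℂ) * ((∑ i, DDΦ i : ℝ) : ℂ))))
          + ((W t x : ℝ) : ℂ) * ((B : ℂ) * e) := hT
      _ = _ := by ring
  -- extract real and imaginary parts
  have hre := congrArg Complex.re hT'
  have him := congrArg Complex.im hT'
  simp [Complex.add_re, Complex.add_im, Complex.mul_re, Complex.mul_im,
    ← Complex.ofReal_pow] at hre him
  -- laplacianR is the sum of DDa
  have hLa : laplacianR (fun y => Real.sqrt (ρ t y)) x = ∑ i, DDa i := rfl
  -- norm of gradient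
  have hnorm : ‖gradient (Φ t) x‖ ^ 2 = ∑ i, (DΦ i) ^ 2 := by
    rw [EuclideanSpace.norm_eq, Real.sq_sqrt (by positivity)]
    refine Finset.sum_congr rfl fun i _ => ?_
    rw [Real.norm_eq_abs, sq_abs, aux_grad_component (Φ t) x i]
  -- differentiability of the gradient field
  have hgraddiff : Differentiable ℝ (gradient (Φ t)) := by
    have h1 : Differentiable ℝ (fderiv ℝ (Φ t)) :=
      (hΦt.fderiv_right (m := 1) (by exact WithTop.coe_le_coe.2 le_top)).differentiable one_ne_zero
    exact ((InnerProductSpace.toDual ℝ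
      (EuclideanSpace ℝ (Fin d))).symm.toContinuousLinearEquiv.differentiable).comp h1
  -- second derivative components of Φ via the gradient
  have hproji : ∀ i, (fderiv ℝ (gradient (Φ t)) x (u i)) i = DDΦ i := by
    intro i
    have h4 : fderiv ℝ (fun y => gradient (Φ t) y i) x
        = (EuclideanSpace.proj i).comp (fderiv ℝ (gradient (Φ t)) x) :=
      ((EuclideanSpace.proj (𝕜 := ℝ) i).hasFDerivAt.comp x (hgraddiff x).hasFDerivAt).fderiv
    have h2 : (fun y => gradient (Φ t) y i) = (fun y => fderiv ℝ (fun z => Φ t z) y (u i)) :=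
      funext fun y => aux_grad_component (Φ t) y i
    rw [h2] at h4
    show (fderiv ℝ (gradient (Φ t)) x (u i)) i
        = fderiv ℝ (fun y => fderiv ℝ (fun z => Φ t z) y (u i)) x (u i)
    rw [h4]
    rfl
  -- divergence computation
  have hdiv : divergence (fun y => ρ t y • gradient (Φ t) y) x
      = (∑ i, Dρ i * DΦ i) + ρ t x * ∑ i, DDΦ i := by
    have hsmul : HasFDerivAt (fun y => ρ t y • gradient (Φ t) y) _ x := (((hρt.differentiable (by simp)) x).hasFDerivAt).smul (hgraddiff x).hasFDerivAt
    unfold divergence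
    rw [hsmul.fderiv]
    rw [Finset.mul_sum, ← Finset.sum_add_distrib]
    refine Finset.sum_congr rfl fun i _ => ?_
    simp only [ContinuousLinearMap.add_apply, ContinuousLinearMap.smul_apply,
      ContinuousLinearMap.smulRight_apply, PiLp.add_apply, PiLp.smul_apply, smul_eq_mul]
    rw [hproji i, aux_grad_component (Φ t) x i]
    ring
  constructor
  · rw [hdiv]
    have hDaDΦ : ∑ i, Da i * DΦ i = 1 / (2 * B) * ∑ i, Dρ i * DΦ i := by
      rw [Finset.mul_sum]
      exact Finset.sum_congr rfl fun i _ => by rw [hsqrt_dir i]; ring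
    rw [hDaDΦ] at him
    field_simp at him
    have key : ρ' * (4 * B) = (-(∑ i, Dρ i * DΦ i) - ρ t x * ∑ i, DDΦ i) * (4 * B) := by
      linear_combination (4 * B) * him - 4 * B * (∑ i, DDΦ i) * hB2
    have h4B : (4 * B) ≠ 0 := by positivity
    have := mul_right_cancel₀ h4B key
    linarith
  · rw [hnorm, hLa]
    field_simp at hre ⊢
    linear_combination (-1 : ℝ) * hre
end

section
/- Let μ > 0 and v ∈ ℝ, and define ρ : ℝ × ℝ → ℝ and Φ : ℝ × ℝ → ℝ by ρ(t,x) = (μ/2)·sech²(√μ·(x − v·t/2)) and Φ(t,x) = (1/2)v·x + (1/2)(μ − v²/4)·t, where sech(y) = 2e^y/(e^{2y}+1). Then for all (t,x) ∈ ℝ × ℝ: (i) ∂ₜρ(t,x) + ∂ₓ(ρ(t,x)·∂ₓΦ(t,x)) = 0, and (ii) ∂ₜΦ(t,x) + (1/2)(∂ₓΦ(t,x))² = 2·ρ(t,x) + (1/2)·∂ₓₓ(√ρ)(t,x)/√(ρ(t,x)). -/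
/-- The hyperbolic secant `sech(y) = 2eʸ/(e^{2y}+1)`. -/
noncomputable def sech (y : ℝ) : ℝ := 2 * Real.exp y / (Real.exp (2 * y) + 1)

/-- The density of the Gross–Pitaevskii soliton: `ρ(t,x) = (μ/2) sech²(√μ(x − vt/2))`. -/
noncomputable def solitonDensity (μ v : ℝ) (t x : ℝ) : ℝ :=
  (μ / 2) * (sech (Real.sqrt μ * (x - v * t / 2))) ^ 2

/-- The phase of the Gross–Pitaevskii soliton: `Φ(t,x) = (1/2)vx + (1/2)(μ − v²/4)t`. -/
noncomputable def solitonPhase (μ v : ℝ) (t x : ℝ) : ℝ :=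
  (1 / 2) * v * x + (1 / 2) * (μ - v ^ 2 / 4) * t

/-!
The density is a travelling wave `ρ(t,x) = P(x − vt/2)` and the phase has constant velocity
`∂ₓΦ = v/2`, so the continuity equation holds for any profile `P`: the time derivative is
`−(v/2) P'` and the flux derivative is `(v/2) P'`. For the Hamilton–Jacobi equation,
`√ρ = √(μ/2) · sech(√μ (x − vt/2))` and `sech'' = sech − 2 sech³`, so the quantum pressure term
is `(μ/2)(1 − 2 sech²) = μ/2 − ρ`; together with `2ρ` this gives `μ/2`, which is exactly
`∂ₜΦ + (∂ₓΦ)²/2 = (μ − v²/4)/2 + v²/8`.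
-/

open Real

lemma sech_eq_inv_cosh (y : ℝ) : sech y = (cosh y)⁻¹ := by
  rw [sech, cosh_eq, exp_neg, show 2 * y = y + y by ring, exp_add]
  field_simp

lemma sech_pos (y : ℝ) : 0 < sech y := by
  rw [sech_eq_inv_cosh]
  exact inv_pos.2 (cosh_pos y)

lemma hasDerivAt_sech (y : ℝ) : HasDerivAt sech (-(sinh y * sech y ^ 2)) y := by
  have h : HasDerivAt (fun y => (cosh y)⁻¹) _ y := (hasDerivAt_cosh y).inv (cosh_pos y).ne'
  rw [← funext sech_eq_inv_cosh] at h
  convert h using 1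
  rw [sech_eq_inv_cosh]
  field_simp

lemma deriv_sech : deriv sech = fun y => -(sinh y * sech y ^ 2) :=
  funext fun y => (hasDerivAt_sech y).deriv

lemma deriv_deriv_sech (y : ℝ) : deriv (deriv sech) y = sech y - 2 * sech y ^ 3 := by
  have h : HasDerivAt (fun y => -(sinh y * sech y ^ 2)) _ y :=
    ((hasDerivAt_sinh y).mul ((hasDerivAt_sech y).pow 2)).neg
  have hcosh : cosh y ≠ 0 := (cosh_pos y).ne'
  rw [deriv_sech, h.deriv]
  simp only [Pi.pow_apply, sech_eq_inv_cosh, Nat.add_one_sub_one, pow_one, Nat.cast_ofNat]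
  field_simp
  linear_combination (-2 : ℝ) * cosh_sq y

lemma deriv_comp_mul_sub (f : ℝ → ℝ) (k b x : ℝ) :
    deriv (fun y => f (k * (y - b))) x = k * deriv f (k * (x - b)) := by
  rw [deriv_comp_sub_const (f := fun z => f (k * z)), deriv_comp_mul_left, smul_eq_mul]

lemma deriv_deriv_comp_mul_sub (f : ℝ → ℝ) (k b x : ℝ) :
    deriv (deriv fun y => f (k * (y - b))) x = k ^ 2 * deriv (deriv f) (k * (x - b)) := by
  rw [funext (deriv_comp_mul_sub f k b), deriv_const_mul_field']
  beta_reduce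
  rw [deriv_comp_mul_sub]
  ring

lemma travellingWave_continuity (f : ℝ → ℝ) (c t x : ℝ) :
    deriv (fun s => f (x - c * s)) t + deriv (fun y => f (y - c * t) * c) x = 0 := by
  rw [deriv_comp_mul_left (f := fun z => f (x - z)), deriv_comp_const_sub,
    deriv_mul_const_field']
  beta_reduce
  rw [deriv_comp_sub_const, smul_eq_mul]
  ring

noncomputable def solitonProfile (μ y : ℝ) : ℝ := μ / 2 * sech (√μ * y) ^ 2

lemma solitonDensity_eq_solitonProfile (μ v t x : ℝ) :
    solitonDensity μ v t x = solitonProfile μ (x - v / 2 * t) := by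
  rw [solitonDensity, solitonProfile]
  ring_nf

lemma sqrt_solitonDensity (μ v t x : ℝ) :
    √(solitonDensity μ v t x) = √(μ / 2) * sech (√μ * (x - v * t / 2)) := by
  rw [solitonDensity, sqrt_mul' _ (sq_nonneg _), sqrt_sq (sech_pos _).le]

lemma hasDerivAt_solitonPhase_space (μ v t x : ℝ) :
    HasDerivAt (fun y => solitonPhase μ v t y) (v / 2) x :=
  (((hasDerivAt_id' x).const_mul (1 / 2 * v)).add_const _).congr_deriv (by ring)

lemma hasDerivAt_solitonPhase_time (μ v t x : ℝ) :
    HasDerivAt (fun s => solitonPhase μ v s x) ((μ - v ^ 2 / 4) / 2) t :=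
  (((hasDerivAt_id' t).const_mul (1 / 2 * (μ - v ^ 2 / 4))).const_add _).congr_deriv (by ring)

/-- For `μ > 0`, the pair `(ρ, Φ)` given by the Gross–Pitaevskii soliton satisfies
the Madelung system of the 1D GPE with `γ = −2`:
(i) the continuity equation `∂ₜρ + ∂ₓ(ρ ∂ₓΦ) = 0`, and
(ii) the Hamilton–Jacobi equation `∂ₜΦ + (1/2)(∂ₓΦ)² = 2ρ + (1/2)∂ₓₓ(√ρ)/√ρ`. -/
theorem soliton_madelung_system (μ v : ℝ) (hμ : 0 < μ) :
    ∀ t x : ℝ,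
      (deriv (fun s => solitonDensity μ v s x) t
          + deriv (fun y => solitonDensity μ v t y * deriv (fun z => solitonPhase μ v t z) y) x
        = 0)
      ∧ (deriv (fun s => solitonPhase μ v s x) t
            + (1 / 2) * (deriv (fun y => solitonPhase μ v t y) x) ^ 2
          = 2 * solitonDensity μ v t x
            + (1 / 2) * deriv (deriv (fun y => Real.sqrt (solitonDensity μ v t y))) x
                / Real.sqrt (solitonDensity μ v t x)) := by
  intro t x
  simp only [(hasDerivAt_solitonPhase_space μ v t _).deriv,
    (hasDerivAt_solitonPhase_time μ v _ x).deriv]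
  constructor
  · simp only [solitonDensity_eq_solitonProfile]
    exact travellingWave_continuity _ (v / 2) t x
  · have hA : √(μ / 2) ≠ 0 := (sqrt_pos.2 (by positivity)).ne'
    simp only [sqrt_solitonDensity, deriv_const_mul_field', deriv_deriv_comp_mul_sub,
      deriv_deriv_sech, sq_sqrt hμ.le]
    rw [solitonDensity]
    have hS : sech (√μ * (x - v * t / 2)) ≠ 0 := (sech_pos _).ne'
    generalize sech (√μ * (x - v * t / 2)) = S at hS ⊢
    field_simp
    ring
end
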